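/- arXiv:2206.12793 — 3 statements merged into one kernel-verified Lean document; each statement's English description precedes it below -/
import Mathlib

section
/- The covariance matrix $\Sigma$ of the $(m-1)k$ indicators $(X_{i,c})_{1\le i\le m-1, 1\le c\le k}$ of the uniform random colouring equals the Kronecker product $B \otimes C$, where $B$ is the $k\times k$ matrix with $B_{cc} = \lambda_c(1-\lambda_c)$ and $B_{cc'} = -\lambda_c\lambda_{c'}$ for $c\ne c'$, and $C$ is the $(m-1)\times(m-1)$ matrix with $1$ on the diagonal and $-1/(m-1)$ off the diagonal; consequently $\det \Sigma = m^{-k}(1-1/m)^{-k(m-1)}\left(\prod_{i=0}^k \lambda_i\right)^{m-1}$. -/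
open Finset Kronecker

/-- The uniformly random colourings of `m` vertices with colour classes of
prescribed sizes `a c`. -/
def colourings (m k : ℕ) (a : Fin (k + 1) → ℕ) : Finset (Fin m → Fin (k + 1)) :=
  Finset.univ.filter fun f => ∀ c, (Finset.univ.filter fun i => f i = c).card = a c

/-- Expectation with respect to the uniform distribution on `colourings m k a`. -/
noncomputable def expec (m k : ℕ) (a : Fin (k + 1) → ℕ)
    (X : (Fin m → Fin (k + 1)) → ℝ) : ℝ :=
  (∑ f ∈ colourings m k a, X f) / (colourings m k a).card

/-- Indicator that vertex `i` receives colour `c`. -/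
def ind (m k : ℕ) (i : Fin m) (c : Fin (k + 1)) (f : Fin m → Fin (k + 1)) : ℝ :=
  if f i = c then 1 else 0

/-- Covariance of two random variables under the uniform random colouring. -/
noncomputable def cov (m k : ℕ) (a : Fin (k + 1) → ℕ)
    (X Y : (Fin m → Fin (k + 1)) → ℝ) : ℝ :=
  expec m k a (fun f => X f * Y f) - expec m k a X * expec m k a Y

/-!
Under the uniform colouring with class sizes `a c = λ_c m` the vertices are exchangeable, so
`E[X_{i,c}] = λ_c` and, for `i ≠ j`, `E[X_{i,c} X_{j,c'}]` is the double count
`∑_{i ≠ j} X_{i,c} X_{j,c'} = a_c a_{c'} - [c = c'] a_c` divided by `m (m - 1)`. Hence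
`Cov(X_{i,c}, X_{j,c'})` factors as a colour term times a vertex term, i.e. `Σ = B ⊗ C`.
Both `B` and a rescaling of `C` have the shape `diagonal x - x xᵀ`, whose determinant
`(∏ x) (1 - ∑ x)` comes from the matrix determinant lemma, and
`det (B ⊗ C) = (det B)^(m-1) (det C)^k`.
-/

lemma Equiv.Perm.exists_apply_eq_and_apply_eq {α : Type*} [DecidableEq α] {i j i' j' : α}
    (hij : i ≠ j) (hij' : i' ≠ j') : ∃ σ : Equiv.Perm α, σ i = i' ∧ σ j = j' := by
  have hj : Equiv.swap i i' j ≠ i' := fun h =>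
    hij ((Equiv.swap i i').injective (by rw [h, Equiv.swap_apply_left]))
  refine ⟨Equiv.swap (Equiv.swap i i' j) j' * Equiv.swap i i', ?_, ?_⟩
  · rw [Equiv.Perm.mul_apply, Equiv.swap_apply_left]
    exact Equiv.swap_apply_of_ne_of_ne hj.symm hij'
  · rw [Equiv.Perm.mul_apply, Equiv.swap_apply_left]

section Determinants

open Matrix

theorem Matrix.det_diagonal_sub_vecMulVec_self {n R : Type*} [Fintype n] [DecidableEq n]
    [CommRing R] (x : n → R) :
    (diagonal x - vecMulVec x x).det = (∏ i, x i) * (1 - ∑ i, x i) := by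
  have hfactor : diagonal x - vecMulVec x x = diagonal x * (1 + vecMulVec 1 (-x)) := by
    ext i j
    by_cases hij : i = j <;> simp [diagonal_mul, vecMulVec_apply, hij, mul_add, sub_eq_add_neg]
  rw [hfactor, det_mul, det_diagonal, vecMulVec_eq Unit,
    det_one_add_replicateCol_mul_replicateRow]
  simp [dotProduct, sub_eq_add_neg]

lemma det_eq_zpow_of_apply_eq {m : ℕ} (hm : 2 ≤ m)
    (C : Matrix (Fin (m - 1)) (Fin (m - 1)) ℝ)
    (hC : ∀ i i', C i i' = if i = i' then (1 : ℝ) else -(1 / ((m : ℝ) - 1))) :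
    C.det = (m : ℝ) ^ (-1 : ℤ) * (1 - 1 / (m : ℝ)) ^ (-((m : ℤ) - 1)) := by
  have hm' : (2 : ℝ) ≤ m := by exact_mod_cast hm
  have hm1 : (m : ℝ) - 1 ≠ 0 := by linarith
  have hC' : C = ((m : ℝ) ^ 2 / (m - 1)) •
      (diagonal (fun _ => (m : ℝ)⁻¹) -
        vecMulVec (fun _ => (m : ℝ)⁻¹) (fun _ => (m : ℝ)⁻¹)) := by
    ext i i'
    rw [hC]
    by_cases h : i = i' <;> simp [h, vecMulVec_apply] <;> field_simp
  have hcast : ((m - 1 : ℕ) : ℝ) = m - 1 := by rw [Nat.cast_sub (by omega)]; simp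
  have hexp : -((m : ℤ) - 1) = -((m - 1 : ℕ) : ℤ) := by
    rw [Nat.cast_sub (by omega), Nat.cast_one]
  rw [hC', det_smul, det_diagonal_sub_vecMulVec_self]
  simp only [prod_const, sum_const, card_univ, Fintype.card_fin, nsmul_eq_mul, hcast]
  have hlast : 1 - (m - 1) * (m : ℝ)⁻¹ = (m : ℝ)⁻¹ := by field_simp; ring
  have hbase : (m : ℝ) ^ 2 / (m - 1) * (m : ℝ)⁻¹ = (1 - 1 / (m : ℝ))⁻¹ := by field_simp
  rw [hexp, _root_.zpow_neg_one, _root_.zpow_neg, zpow_natCast, ← inv_pow, hlast, ← mul_assoc,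
    ← mul_pow, hbase, mul_comm]

lemma det_eq_prod_of_apply_eq {k : ℕ} (lam : Fin (k + 1) → ℝ) (hsum : ∑ c, lam c = 1)
    (B : Matrix (Fin k) (Fin k) ℝ)
    (hB : ∀ c c', B c c' = if c = c' then lam c.succ * (1 - lam c.succ)
        else -(lam c.succ * lam c'.succ)) :
    B.det = ∏ c, lam c := by
  have hB' : B = diagonal (fun c => lam c.succ) -
      vecMulVec (fun c => lam c.succ) (fun c => lam c.succ) := by
    ext c c'
    rw [hB]
    by_cases h : c = c' <;> simp [h, vecMulVec_apply, mul_sub]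
  rw [hB', det_diagonal_sub_vecMulVec_self, Fin.prod_univ_succ, ← hsum, Fin.sum_univ_succ]
  ring

end Determinants

section Colourings

variable {m k : ℕ} {a : Fin (k + 1) → ℕ}

lemma mem_colourings {f : Fin m → Fin (k + 1)} :
    f ∈ colourings m k a ↔ ∀ c, (univ.filter fun i => f i = c).card = a c := by
  simp [colourings]

lemma comp_perm_mem_colourings (σ : Equiv.Perm (Fin m)) {f : Fin m → Fin (k + 1)}
    (hf : f ∈ colourings m k a) : f ∘ σ ∈ colourings m k a := by
  rw [mem_colourings] at hf ⊢
  intro c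
  rw [← hf c]
  exact card_equiv σ fun i => by simp

lemma colourings_nonempty (hasum : ∑ c, a c = m) : (colourings m k a).Nonempty := by
  obtain e : (Σ c, Fin (a c)) ≃ Fin m := Fintype.equivOfCardEq (by simp [hasum])
  refine ⟨fun i => (e.symm i).1, mem_colourings.2 fun c => ?_⟩
  rw [← Fintype.card_subtype, ← Fintype.card_fin (a c)]
  exact Fintype.card_congr ((e.symm.subtypeEquiv fun _ => Iff.rfl).trans (Equiv.sigmaSubtype c))

lemma sum_ind_of_mem_colourings {f : Fin m → Fin (k + 1)} (hf : f ∈ colourings m k a)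
    (c : Fin (k + 1)) : ∑ i, ind m k i c f = a c := by
  simp only [ind, sum_boole, mem_colourings.1 hf c]

lemma ind_mul_ind_self (i : Fin m) (c c' : Fin (k + 1)) (f : Fin m → Fin (k + 1)) :
    ind m k i c f * ind m k i c' f = if c = c' then ind m k i c f else 0 := by
  unfold ind
  split_ifs <;> simp_all

lemma expec_congr {X Y : (Fin m → Fin (k + 1)) → ℝ}
    (h : ∀ f ∈ colourings m k a, X f = Y f) : expec m k a X = expec m k a Y := by
  rw [expec, expec, sum_congr rfl h]

lemma expec_const (hne : (colourings m k a).Nonempty) (r : ℝ) :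
    expec m k a (fun _ => r) = r := by
  have : ((colourings m k a).card : ℝ) ≠ 0 := by exact_mod_cast hne.card_pos.ne'
  rw [expec, sum_const, nsmul_eq_mul, mul_div_cancel_left₀ _ this]

lemma expec_sum {ι : Type*} (s : Finset ι) (X : ι → (Fin m → Fin (k + 1)) → ℝ) :
    expec m k a (fun f => ∑ i ∈ s, X i f) = ∑ i ∈ s, expec m k a (X i) := by
  simp only [expec, sum_comm (s := colourings m k a), sum_div]

lemma expec_comp_perm (σ : Equiv.Perm (Fin m)) (X : (Fin m → Fin (k + 1)) → ℝ) :
    expec m k a (fun f => X (f ∘ σ)) = expec m k a X := by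
  rw [expec, expec]
  congr 1
  exact sum_nbij' (· ∘ σ) (· ∘ σ.symm) (fun f hf => comp_perm_mem_colourings σ hf)
    (fun f hf => comp_perm_mem_colourings σ.symm hf) (fun f _ => by ext; simp)
    (fun f _ => by ext; simp) fun _ _ => rfl

lemma expec_ind_eq (i i' : Fin m) (c : Fin (k + 1)) :
    expec m k a (ind m k i c) = expec m k a (ind m k i' c) := by
  rw [← expec_comp_perm (Equiv.swap i i') (ind m k i' c)]
  congr 1
  ext f
  simp [ind]

lemma expec_ind_mul_ind_eq {i j i' j' : Fin m} (hij : i ≠ j) (hij' : i' ≠ j')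
    (c c' : Fin (k + 1)) :
    expec m k a (fun f => ind m k i c f * ind m k j c' f)
      = expec m k a (fun f => ind m k i' c f * ind m k j' c' f) := by
  obtain ⟨σ, hσi, hσj⟩ := Equiv.Perm.exists_apply_eq_and_apply_eq hij hij'
  rw [← expec_comp_perm σ]
  simp [ind, hσi, hσj]

lemma expec_ind (hm : m ≠ 0) (hne : (colourings m k a).Nonempty) (i : Fin m)
    (c : Fin (k + 1)) : expec m k a (ind m k i c) = a c / m := by
  have htotal : ∑ j, expec m k a (ind m k j c) = a c := by
    rw [← expec_sum, expec_congr fun f hf => sum_ind_of_mem_colourings hf c, expec_const hne]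
  rw [sum_congr rfl fun j _ => expec_ind_eq j i c, sum_const, card_univ, Fintype.card_fin,
    nsmul_eq_mul] at htotal
  rw [← htotal, mul_div_cancel_left₀ _ (Nat.cast_ne_zero.2 hm)]

lemma expec_ind_mul_ind_self (hm : m ≠ 0) (hne : (colourings m k a).Nonempty) (i : Fin m)
    (c c' : Fin (k + 1)) :
    expec m k a (fun f => ind m k i c f * ind m k i c' f)
      = if c = c' then (a c : ℝ) / m else 0 := by
  rw [expec_congr fun f _ => ind_mul_ind_self i c c' f]
  split_ifs
  · exact expec_ind hm hne i c
  · exact expec_const hne 0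

lemma expec_ind_mul_ind (hm : 2 ≤ m) (hne : (colourings m k a).Nonempty) {i j : Fin m}
    (hij : i ≠ j) (c c' : Fin (k + 1)) :
    expec m k a (fun f => ind m k i c f * ind m k j c' f)
      = (a c * a c' - if c = c' then (a c : ℝ) else 0) / (m * (m - 1)) := by
  have hpair : ∀ f ∈ colourings m k a,
      ∑ i', ∑ j' ∈ univ.erase i', ind m k i' c f * ind m k j' c' f
        = a c * a c' - if c = c' then (a c : ℝ) else 0 := by
    intro f hf
    simp only [sum_erase_eq_sub (mem_univ _), ← mul_sum, sum_ind_of_mem_colourings hf,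
      ind_mul_ind_self, sum_sub_distrib, ← sum_mul]
    split_ifs <;> simp [sum_ind_of_mem_colourings hf]
  have htotal : ∑ i', ∑ j' ∈ univ.erase i',
      expec m k a (fun f => ind m k i' c f * ind m k j' c' f)
        = a c * a c' - if c = c' then (a c : ℝ) else 0 := by
    simp only [← expec_sum]
    rw [expec_congr hpair, expec_const hne]
  have hm1 : (m : ℝ) - 1 ≠ 0 := by
    have : (2 : ℝ) ≤ m := by exact_mod_cast hm
    linarith
  rw [← htotal, sum_congr rfl fun i' _ => sum_congr rfl fun j' hj' =>
    expec_ind_mul_ind_eq (ne_of_mem_erase hj').symm hij c c']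
  simp only [sum_const, card_erase_of_mem (mem_univ _), card_univ, Fintype.card_fin,
    nsmul_eq_mul, Nat.cast_sub (by omega : 1 ≤ m), Nat.cast_one]
  field_simp

lemma cov_ind (hm : 2 ≤ m) (hne : (colourings m k a).Nonempty) {lam : Fin (k + 1) → ℝ}
    (ha : ∀ c, (a c : ℝ) = lam c * m) (i j : Fin m) (c c' : Fin (k + 1)) :
    cov m k a (ind m k i c) (ind m k j c') =
      ((if c = c' then lam c else 0) - lam c * lam c') *
        (if i = j then 1 else -(1 / ((m : ℝ) - 1))) := by
  have hm0 : m ≠ 0 := by omega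
  have hm1 : (m : ℝ) - 1 ≠ 0 := by
    have : (2 : ℝ) ≤ m := by exact_mod_cast hm
    linarith
  rw [cov, expec_ind hm0 hne, expec_ind hm0 hne, ha, ha]
  rcases eq_or_ne i j with rfl | hij
  · rw [expec_ind_mul_ind_self hm0 hne, ha, if_pos rfl]
    split_ifs <;> field_simp
  · rw [expec_ind_mul_ind hm hne hij, ha, ha, if_neg hij]
    split_ifs <;> field_simp <;> ring

end Colourings

theorem stmt_16_general (m k : ℕ) (hm : 2 ≤ m)
    (lam : Fin (k + 1) → ℝ) (hsum : ∑ c, lam c = 1)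
    (a : Fin (k + 1) → ℕ)
    (ha : ∀ c, (a c : ℝ) = lam c * m) (hasum : ∑ c, a c = m)
    (Sigma : Matrix (Fin k × Fin (m - 1)) (Fin k × Fin (m - 1)) ℝ)
    (hSigma : ∀ p q, Sigma p q =
        cov m k a (ind m k (Fin.castLE (Nat.sub_le m 1) p.2) p.1.succ)
          (ind m k (Fin.castLE (Nat.sub_le m 1) q.2) q.1.succ))
    (B : Matrix (Fin k) (Fin k) ℝ)
    (hB : ∀ c c', B c c' = if c = c' then lam c.succ * (1 - lam c.succ)
        else -(lam c.succ * lam c'.succ))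
    (C : Matrix (Fin (m - 1)) (Fin (m - 1)) ℝ)
    (hC : ∀ i i', C i i' = if i = i' then (1 : ℝ) else -(1 / ((m : ℝ) - 1))) :
    Sigma = B ⊗ₖ C
      ∧ Sigma.det = (m : ℝ) ^ (-(k : ℤ)) *
          (1 - 1 / (m : ℝ)) ^ (-(k * (m - 1) : ℤ)) *
          (∏ c, lam c) ^ (m - 1) := by
  have hKron : Sigma = B ⊗ₖ C := by
    ext ⟨c, i⟩ ⟨c', i'⟩
    rw [hSigma, cov_ind hm (colourings_nonempty hasum) ha, Matrix.kroneckerMap_apply, hB, hC]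
    simp only [Fin.succ_inj, Fin.castLE_inj]
    split_ifs <;> subst_vars <;> ring
  have hCpow : ((m : ℝ) ^ (-1 : ℤ) * (1 - 1 / (m : ℝ)) ^ (-((m : ℤ) - 1))) ^ k
      = (m : ℝ) ^ (-(k : ℤ)) * (1 - 1 / (m : ℝ)) ^ (-(k * (m - 1) : ℤ)) := by
    rw [mul_pow, ← zpow_natCast, ← zpow_natCast, ← zpow_mul, ← zpow_mul]
    ring_nf
  refine ⟨hKron, ?_⟩
  rw [hKron, Matrix.det_kronecker, Fintype.card_fin, Fintype.card_fin,
    det_eq_prod_of_apply_eq lam hsum B hB, det_eq_zpow_of_apply_eq hm C hC, hCpow, mul_comm]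

/-- The covariance matrix of the indicators `(X_{i,c})` (omitting `i = m` and
`c = 0`) is the Kronecker product `B ⊗ₖ C`, and its determinant is
`m^{-k} (1-1/m)^{-k(m-1)} (∏ λ_i)^{m-1}`. -/
theorem stmt_16 (m k : ℕ) (hm : 2 ≤ m) (hk : 1 ≤ k)
    (lam : Fin (k + 1) → ℝ) (hpos : ∀ c, 0 < lam c) (hsum : ∑ c, lam c = 1)
    (a : Fin (k + 1) → ℕ) (hapos : ∀ c, 0 < a c)
    (ha : ∀ c, (a c : ℝ) = lam c * m) (hasum : ∑ c, a c = m)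
    (Sigma : Matrix (Fin k × Fin (m - 1)) (Fin k × Fin (m - 1)) ℝ)
    (hSigma : ∀ p q, Sigma p q =
        cov m k a (ind m k (Fin.castLE (Nat.sub_le m 1) p.2) p.1.succ)
          (ind m k (Fin.castLE (Nat.sub_le m 1) q.2) q.1.succ))
    (B : Matrix (Fin k) (Fin k) ℝ)
    (hB : ∀ c c', B c c' = if c = c' then lam c.succ * (1 - lam c.succ)
        else -(lam c.succ * lam c'.succ))
    (C : Matrix (Fin (m - 1)) (Fin (m - 1)) ℝ)
    (hC : ∀ i i', C i i' = if i = i' then (1 : ℝ) else -(1 / ((m : ℝ) - 1))) :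
    Sigma = B ⊗ₖ C
      ∧ Sigma.det = (m : ℝ) ^ (-(k : ℤ)) *
          (1 - 1 / (m : ℝ)) ^ (-(k * (m - 1) : ℤ)) *
          (∏ c, lam c) ^ (m - 1) :=
  stmt_16_general m k hm lam hsum a ha hasum Sigma hSigma B hB C hC
end

section
/- Let $Z \ge 2$ be an integer, and let real sequences $A(i) \ge 0$ and $B(i)$ with $1-(i-1)B(i) \ge 0$ for $1 \le i \le Z$ be given. Define $n_0 = 1$ and $n_i = n_{i-1} \cdot \frac{1}{i} A(i)(1-(i-1)B(i))$. Set $A_2 = \max_i A(i)$, $C_1 = \min_i A(i)B(i)$, and suppose $0 < \hat c < 1/3$ satisfies $\max\{A/Z, |C|\} \le \hat c$ for all $A \in [\min_i A(i), A_2]$ and $C \in [C_1, \max_i A(i)B(i)]$. Then $\sum_{i=0}^Z n_i \le \exp\left(A_2 - \tfrac12 A_2 C_1 + \tfrac12 A_2 C_1^2\right) + (2e\hat c)^Z$. -/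
/-!
Every factor of the recursion satisfies `0 ≤ A(i)(1 - (i-1)B(i)) ≤ A₂ - (i-1)C₁`, so
`n_i ≤ ∏_{j<i} (A₂ - jC₁) / i!`. For `C₁ ≠ 0` this majorant is the `i`-th term of the binomial
series of `(1 + C₁)^α`, `α = A₂/C₁`. A truncated binomial series stays below `(1 + x)^α` when
`-1 < x ≤ 0` and `α ≤ 0`, or when `x ≥ 0` and at most `α + 1` terms are kept, by induction on the
number of terms: the remainder `R_{n+1}(α, ·)` has derivative `α R_n(α - 1, ·)`. When `C₁ > 0`
only `α ≥ Z - 1` is known, so the last term is split off and bounded by `A₂^Z / Z! ≤ (e ĉ)^Z`.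
Finally `x log(1 + x) ≤ x (x - x²/2 + x³/2)` for `x ≥ -1/3` turns `(1 + C₁)^α` into the
exponential.
-/

open Finset Nat Real

noncomputable def binomTerm (α x : ℝ) (i : ℕ) : ℝ := (∏ j ∈ range i, (α - j)) * x ^ i / i !

@[simp] theorem binomTerm_zero (α x : ℝ) : binomTerm α x 0 = 1 := by simp [binomTerm]

noncomputable def binomRemainder (n : ℕ) (α x : ℝ) : ℝ :=
  (1 + x) ^ α - ∑ i ∈ range n, binomTerm α x i

theorem hasDerivAt_binomTerm_succ (α y : ℝ) (i : ℕ) :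
    HasDerivAt (fun x => binomTerm α x (i + 1)) (α * binomTerm (α - 1) y i) y := by
  have hfun : (fun x => binomTerm α x (i + 1)) =
      fun x => (∏ j ∈ range (i + 1), (α - j)) / (i + 1)! * x ^ (i + 1) := by
    funext x
    rw [binomTerm, mul_div_right_comm]
  rw [hfun]
  have hprod : ∏ j ∈ range (i + 1), (α - j) = (∏ j ∈ range i, (α - 1 - j)) * α := by
    rw [prod_range_succ']
    push_cast
    simp only [sub_add_eq_sub_sub, sub_right_comm _ _ (1 : ℝ), sub_zero]
  refine ((hasDerivAt_pow (i + 1) y).const_mul _).congr_deriv ?_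
  rw [binomTerm, hprod, factorial_succ, Nat.add_sub_cancel]
  push_cast
  field_simp

theorem hasDerivAt_binomRemainder_succ (n : ℕ) (α : ℝ) {y : ℝ} (hy : -1 < y) :
    HasDerivAt (binomRemainder (n + 1) α) (α * binomRemainder n (α - 1) y) y := by
  have hpow := ((hasDerivAt_id' y).const_add 1).rpow_const (p := α) (Or.inl (by linarith))
  have hsum : HasDerivAt (fun x => ∑ i ∈ range (n + 1), binomTerm α x i)
      (∑ i ∈ range n, α * binomTerm (α - 1) y i) y := by
    simp only [sum_range_succ', binomTerm_zero]
    exact (HasDerivAt.fun_sum fun i _ => hasDerivAt_binomTerm_succ α y i).add_const 1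
  exact (hpow.sub hsum).congr_deriv (by simp [binomRemainder, mul_sub, mul_sum])

theorem binomRemainder_succ_zero (n : ℕ) (α : ℝ) : binomRemainder (n + 1) α 0 = 0 := by
  simp [binomRemainder, binomTerm, sum_range_succ']

theorem binomRemainder_nonneg_of_nonneg {n : ℕ} {α x : ℝ} (hx : 0 ≤ x) (hn : (n : ℝ) ≤ α + 1) :
    0 ≤ binomRemainder n α x := by
  induction n generalizing α x with
  | zero => simpa [binomRemainder] using rpow_nonneg (by linarith) α
  | succ n ih =>
    push_cast at hn
    have hα : 0 ≤ α := by linarith [n.cast_nonneg (α := ℝ)]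
    have hderiv (y : ℝ) (hy : 0 ≤ y) := hasDerivAt_binomRemainder_succ n α (y := y) (by linarith)
    have hmono : MonotoneOn (binomRemainder (n + 1) α) (Set.Ici 0) :=
      monotoneOn_of_hasDerivWithinAt_nonneg (convex_Ici 0)
        (fun y hy => (hderiv y hy).continuousAt.continuousWithinAt)
        (fun y hy => (hderiv y (interior_subset hy)).hasDerivWithinAt)
        (fun y hy => mul_nonneg hα (ih (interior_subset hy) (by linarith)))
    simpa [binomRemainder_succ_zero] using hmono Set.self_mem_Ici hx hx

theorem binomRemainder_nonneg_of_nonpos {n : ℕ} {α x : ℝ} (hx : -1 < x) (hx0 : x ≤ 0)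
    (hα : α ≤ 0) : 0 ≤ binomRemainder n α x := by
  induction n generalizing α x with
  | zero => simpa [binomRemainder] using rpow_nonneg (by linarith) α
  | succ n ih =>
    have hderiv (y : ℝ) (hy : y ∈ Set.Icc x 0) :=
      hasDerivAt_binomRemainder_succ n α (y := y) (by linarith [hy.1])
    have hanti : AntitoneOn (binomRemainder (n + 1) α) (Set.Icc x 0) :=
      antitoneOn_of_hasDerivWithinAt_nonpos (convex_Icc x 0)
        (fun y hy => (hderiv y hy).continuousAt.continuousWithinAt)
        (fun y hy => (hderiv y (interior_subset hy)).hasDerivWithinAt)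
        (fun y hy => mul_nonpos_of_nonpos_of_nonneg hα
          (ih (by linarith [(interior_subset hy).1]) (interior_subset hy).2 (by linarith)))
    simpa [binomRemainder_succ_zero] using
      hanti (Set.left_mem_Icc.2 hx0) (Set.right_mem_Icc.2 hx0) hx0

theorem mul_log_one_add_le {x : ℝ} (hx : -1 / 3 ≤ x) :
    x * log (1 + x) ≤ x * (x - x ^ 2 / 2 + x ^ 3 / 2) := by
  set g : ℝ → ℝ := fun y => y - y ^ 2 / 2 + y ^ 3 / 2 - log (1 + y)
  -- `g' y = y² (1 + 3y) / (2 (1 + y))`, which is where the threshold `-1/3` comes from.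
  have hderiv (y : ℝ) (hy : -1 / 3 ≤ y) :
      HasDerivAt g (y ^ 2 * (1 + 3 * y) / (2 * (1 + y))) y := by
    have hlog := ((hasDerivAt_id' y).const_add 1).log (by linarith)
    have hpoly := (((hasDerivAt_id' y).sub ((hasDerivAt_pow 2 y).div_const 2)).add
      ((hasDerivAt_pow 3 y).div_const 2))
    refine (hpoly.sub hlog).congr_deriv ?_
    have h1y : 0 < 1 + y := by linarith
    field_simp
    ring
  have hmono : MonotoneOn g (Set.Ici (-1 / 3)) :=
    monotoneOn_of_hasDerivWithinAt_nonneg (convex_Ici _)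
      (fun y hy => (hderiv y hy).continuousAt.continuousWithinAt)
      (fun y hy => (hderiv y (interior_subset hy)).hasDerivWithinAt)
      (fun y hy => by
        have hy' : -1 / 3 < y := by simpa using hy
        exact div_nonneg (mul_nonneg (sq_nonneg y) (by linarith)) (by linarith))
  have hg0 : g 0 = 0 := by simp [g]
  have hxg : 0 ≤ x * g x := by
    rcases le_total 0 x with h | h
    · exact mul_nonneg h (hg0 ▸ hmono (by norm_num) hx h)
    · exact mul_nonneg_of_nonpos_of_nonpos h (hg0 ▸ hmono hx (by norm_num) h)
  simp only [g] at hxg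
  linarith

theorem one_add_rpow_div_le_exp {a C : ℝ} (ha : 0 ≤ a) (hC : -1 / 3 ≤ C) (hC0 : C ≠ 0) :
    (1 + C) ^ (a / C) ≤ exp (a - a * C / 2 + a * C ^ 2 / 2) := by
  rw [rpow_def_of_pos (by linarith), exp_le_exp]
  calc log (1 + C) * (a / C) = a / C ^ 2 * (C * log (1 + C)) := by field_simp
    _ ≤ a / C ^ 2 * (C * (C - C ^ 2 / 2 + C ^ 3 / 2)) :=
      mul_le_mul_of_nonneg_left (mul_log_one_add_le hC) (by positivity)
    _ = a - a * C / 2 + a * C ^ 2 / 2 := by field_simp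

theorem pow_div_factorial_le_exp_one_mul_pow {a c : ℝ} {n : ℕ} (ha : 0 ≤ a) (hc : 0 ≤ c)
    (h : a ≤ c * n) : a ^ n / n ! ≤ (exp 1 * c) ^ n := by
  calc a ^ n / n ! ≤ (c * n) ^ n / n ! := by gcongr
    _ = c ^ n * ((n : ℝ) ^ n / n !) := by rw [mul_pow]; ring
    _ ≤ c ^ n * exp n := by gcongr; exact pow_div_factorial_le_exp _ n.cast_nonneg n
    _ = (exp 1 * c) ^ n := by rw [mul_pow, ← exp_one_pow]; ring

theorem prod_sub_mul_div_factorial_eq_binomTerm (a : ℝ) {C : ℝ} (hC : C ≠ 0) (i : ℕ) :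
    (∏ j ∈ range i, (a - j * C)) / i ! = binomTerm (a / C) C i := by
  have hprod : ∏ j ∈ range i, (a - j * C) = (∏ j ∈ range i, (a / C - j)) * C ^ i := by
    rw [← card_range i, ← prod_const, card_range, ← prod_mul_distrib]
    exact prod_congr rfl fun j _ => by field_simp
  rw [hprod, binomTerm]

theorem sum_prod_sub_mul_div_factorial_le {a C : ℝ} {Z : ℕ} (ha : 0 ≤ a) (hC : -1 / 3 ≤ C)
    (hpos : ∀ j < Z, 0 ≤ a - j * C) :
    ∑ i ∈ range (Z + 1), (∏ j ∈ range i, (a - j * C)) / i ! ≤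
      exp (a - a * C / 2 + a * C ^ 2 / 2) + a ^ Z / Z ! := by
  rcases lt_trichotomy C 0 with hneg | rfl | hpos'
  · have hsum := sub_nonneg.1 <| binomRemainder_nonneg_of_nonpos (n := Z + 1) (by linarith)
      hneg.le (div_nonpos_of_nonneg_of_nonpos ha hneg.le)
    simp only [← prod_sub_mul_div_factorial_eq_binomTerm a hneg.ne] at hsum
    linarith [one_add_rpow_div_le_exp ha hC hneg.ne, (by positivity : 0 ≤ a ^ Z / Z !)]
  · simpa using (sum_le_exp_of_nonneg ha (Z + 1)).trans (le_add_of_nonneg_right (by positivity))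
  · rw [sum_range_succ]
    have hZ : (Z : ℝ) ≤ a / C + 1 := by
      rw [← sub_le_iff_le_add, le_div_iff₀ hpos']
      rcases Z with _ | k
      · push_cast; linarith
      · simpa [sub_nonneg] using hpos k (by omega)
    have hsum := sub_nonneg.1 <| binomRemainder_nonneg_of_nonneg (n := Z) hpos'.le hZ
    simp only [← prod_sub_mul_div_factorial_eq_binomTerm a hpos'.ne'] at hsum
    have hlast : ∏ j ∈ range Z, (a - j * C) ≤ a ^ Z := by
      simpa using prod_le_prod (fun j hj => hpos j (mem_range.1 hj))
        (fun j _ => sub_le_self a (by positivity))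
    gcongr
    exact hsum.trans (one_add_rpow_div_le_exp ha hC hpos'.ne')

theorem eq_prod_div_factorial_of_rec {u f : ℕ → ℝ} {Z : ℕ} (h0 : u 0 = 1)
    (hrec : ∀ i ∈ Icc 1 Z, u i = u (i - 1) * (1 / i * f i)) :
    ∀ i ≤ Z, u i = (∏ k ∈ range i, f (k + 1)) / i ! := by
  intro i hi
  induction i with
  | zero => simp [h0]
  | succ i ih =>
    rw [hrec (i + 1) (mem_Icc.2 ⟨by omega, hi⟩), Nat.add_sub_cancel, ih (by omega),
      prod_range_succ, factorial_succ]
    push_cast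
    field_simp

/-- Upper-bound half of the summation lemma (Greenhill–McKay–Wang, Cor. 4.5). -/
theorem stmt_17 (Z : ℕ) (hZ : 2 ≤ Z) (A B : ℕ → ℝ)
    (hA : ∀ i ∈ Finset.Icc 1 Z, 0 ≤ A i)
    (hB : ∀ i ∈ Finset.Icc 1 Z, 0 ≤ 1 - ((i : ℝ) - 1) * B i)
    (nn : ℕ → ℝ) (hn0 : nn 0 = 1)
    (hrec : ∀ i ∈ Finset.Icc 1 Z,
      nn i = nn (i - 1) * ((1 / (i : ℝ)) * A i * (1 - ((i : ℝ) - 1) * B i)))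
    (A1 A2 C1 C2 : ℝ)
    (hA1 : IsLeast ((fun i => A i) '' (Finset.Icc 1 Z : Finset ℕ)) A1)
    (hA2 : IsGreatest ((fun i => A i) '' (Finset.Icc 1 Z : Finset ℕ)) A2)
    (hC1 : IsLeast ((fun i => A i * B i) '' (Finset.Icc 1 Z : Finset ℕ)) C1)
    (hC2 : IsGreatest ((fun i => A i * B i) '' (Finset.Icc 1 Z : Finset ℕ)) C2)
    (c : ℝ) (hc0 : 0 < c) (hc3 : c < 1 / 3)
    (hbound : ∀ x ∈ Set.Icc A1 A2, x / Z ≤ c)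
    (hbound' : ∀ x ∈ Set.Icc C1 C2, |x| ≤ c) :
    ∑ i ∈ Finset.range (Z + 1), nn i ≤
      Real.exp (A2 - A2 * C1 / 2 + A2 * C1 ^ 2 / 2) +
        (2 * Real.exp 1 * c) ^ Z := by
  set f : ℕ → ℝ := fun i => A i * (1 - ((i : ℝ) - 1) * B i)
  have hnn := eq_prod_div_factorial_of_rec hn0 (f := f) fun i hi => (hrec i hi).trans (by ring)
  have hf (k : ℕ) (hk : k < Z) : 0 ≤ f (k + 1) ∧ f (k + 1) ≤ A2 - k * C1 := by
    have hmem : k + 1 ∈ Icc 1 Z := mem_Icc.2 ⟨by omega, hk⟩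
    have hAle : A (k + 1) ≤ A2 := hA2.2 ⟨k + 1, hmem, rfl⟩
    have hCle : C1 ≤ A (k + 1) * B (k + 1) := hC1.2 ⟨k + 1, hmem, rfl⟩
    have hBk := hB _ hmem
    simp only [f, Nat.cast_add_one, add_sub_cancel_right] at hBk ⊢
    exact ⟨mul_nonneg (hA _ hmem) hBk,
      by nlinarith [mul_le_mul_of_nonneg_left hCle k.cast_nonneg]⟩
  have hpos (j : ℕ) (hj : j < Z) : 0 ≤ A2 - j * C1 := (hf j hj).1.trans (hf j hj).2
  have hA2₀ : 0 ≤ A2 := by simpa using hpos 0 (by omega)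
  have hC1 : -1 / 3 ≤ C1 := by
    linarith [abs_le.1 (hbound' C1 ⟨le_rfl, hC2.2 hC1.1⟩)]
  have hA2Z : A2 ≤ c * Z := (div_le_iff₀ (by norm_cast; omega)).1 (hbound A2 ⟨hA2.2 hA1.1, le_rfl⟩)
  calc ∑ i ∈ range (Z + 1), nn i
      ≤ ∑ i ∈ range (Z + 1), (∏ j ∈ range i, (A2 - j * C1)) / i ! := by
        refine sum_le_sum fun i hi => ?_
        have hi : i ≤ Z := Nat.lt_succ_iff.1 (mem_range.1 hi)
        rw [hnn i hi]
        have hlt {k : ℕ} (hk : k ∈ range i) : k < Z := (mem_range.1 hk).trans_le hi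
        exact div_le_div_of_nonneg_right
          (prod_le_prod (fun k hk => (hf k (hlt hk)).1) (fun k hk => (hf k (hlt hk)).2))
          (by positivity)
    _ ≤ exp (A2 - A2 * C1 / 2 + A2 * C1 ^ 2 / 2) + A2 ^ Z / Z ! :=
        sum_prod_sub_mul_div_factorial_le hA2₀ hC1 hpos
    _ ≤ exp (A2 - A2 * C1 / 2 + A2 * C1 ^ 2 / 2) + (2 * exp 1 * c) ^ Z := by
        gcongr
        refine (pow_div_factorial_le_exp_one_mul_pow hA2₀ hc0.le hA2Z).trans ?_
        gcongr
        linarith [exp_pos 1]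
end

section
/- Let $Z \ge 2$ be an integer, and let real sequences $A(i) \ge 0$ and $B(i)$ with $1-(i-1)B(i) \ge 0$ for $1 \le i \le Z$ be given. Define $n_0 = 1$ and $n_i = n_{i-1}\cdot\frac{1}{i}A(i)(1-(i-1)B(i))$. Set $A_1 = \min_i A(i)$, $C_2 = \max_i A(i)B(i)$, and suppose $0 < \hat c < 1/3$ satisfies $\max\{A/Z,|C|\} \le \hat c$ for all $A \in [A_1, \max_i A(i)]$ and $C \in [\min_i A(i)B(i), C_2]$. Then $\sum_{i=0}^Z n_i \ge \exp\left(A_1 - \tfrac12 A_1 C_2\right) - (2e\hat c)^Z$. -/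
/-!
Write `a = A₁` and `C = C₂`. Each factor `A(i) (1 - (i-1) B(i))` is at least `max (a - (i-1) C) 0`,
so `n_i` dominates `∏_{j<i} max (a - j C) 0 / i!`. Without the `max`, these are the Taylor
coefficients at `0` of `φ(t) = (1 + C t)^(a/C)` (read `e^(a t)` when `C = 0`): the `n`-th derivative
of `φ` is `∏_{j<n} (a - j C) · φ(t) / (1 + C t)^n`. Moreover `φ(1) ≥ e^(a - a C / 2)`, because
`(log φ)' = a / (1 + C t) ≥ a (1 - C t)`.

If every factor `a - j C` with `j < Z` is nonnegative, the Lagrange remainders tend to `0`, and the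
coefficients beyond `Z` are bounded by `2^(Z-1) (2c)^i`, whose sum is at most `(2ec)^Z`. Otherwise
the first negative factor `a - M C`, with `M < Z`, makes the Lagrange remainder of order `M`
nonpositive, so the partial sum up to `M` already exceeds `φ(1)`.
-/

open Finset Set Filter Topology
open scoped Nat

theorem monotoneOn_Icc_of_hasDerivAt_nonneg {f f' : ℝ → ℝ} {a b : ℝ}
    (hf : ∀ x ∈ Icc a b, HasDerivAt f (f' x) x) (hf' : ∀ x ∈ Icc a b, 0 ≤ f' x) :
    MonotoneOn f (Icc a b) :=
  monotoneOn_of_hasDerivWithinAt_nonneg (convex_Icc a b)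
    (fun x hx => (hf x hx).continuousAt.continuousWithinAt)
    (fun x hx => (hf x (interior_subset hx)).hasDerivWithinAt)
    (fun x hx => hf' x (interior_subset hx))

theorem exists_sub_sum_eq_of_hasDerivWithinAt {D : ℕ → ℝ → ℝ}
    (hD : ∀ n, ∀ t ∈ Icc (0 : ℝ) 1, HasDerivWithinAt (D n) (D (n + 1) t) (Icc 0 1) t) (N : ℕ) :
    ∃ ξ ∈ Ioo (0 : ℝ) 1, D 0 1 - ∑ i ∈ range (N + 1), D i 0 / i ! = D (N + 1) ξ / (N + 1)! := by
  have hiter : ∀ n, EqOn (iteratedDerivWithin n (D 0) (Icc 0 1)) (D n) (Icc 0 1) := by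
    intro n
    induction n with
    | zero => intro t _; simp
    | succ n ih =>
      intro t ht
      rw [iteratedDerivWithin_succ, derivWithin_congr ih (ih ht)]
      exact (hD n t ht).derivWithin (uniqueDiffOn_Icc one_pos t ht)
  have hdiff (n : ℕ) : DifferentiableOn ℝ (iteratedDerivWithin n (D 0) (Icc 0 1)) (Icc 0 1) :=
    DifferentiableOn.congr (fun t ht => (hD n t ht).differentiableWithinAt) (hiter n)
  have hsmooth : ContDiffOn ℝ N (D 0) (Icc 0 1) :=
    (contDiffOn_nat_iff_continuousOn_differentiableOn_deriv (uniqueDiffOn_Icc one_pos)).2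
      ⟨fun m _ => (hdiff m).continuousOn, fun m _ => hdiff m⟩
  obtain ⟨ξ, hξ, h⟩ := taylor_mean_remainder_lagrange zero_ne_one
    (by rwa [Set.uIcc_of_le zero_le_one])
    (by rw [Set.uIcc_of_le zero_le_one, Set.uIoo_of_le zero_le_one]
        exact (hdiff N).mono Ioo_subset_Icc_self)
  rw [Set.uIoo_of_le zero_le_one] at hξ
  rw [Set.uIcc_of_le zero_le_one, taylor_within_apply] at h
  refine ⟨ξ, hξ, ?_⟩
  simpa [← hiter _ (Ioo_subset_Icc_self hξ), ← hiter _ (left_mem_Icc.2 zero_le_one),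
    div_eq_inv_mul] using h

noncomputable def deformedLog (C t : ℝ) : ℝ := if C = 0 then t else Real.log (1 + C * t) / C

/-- `(1 + C t) ^ (a / C)`, continued to `C = 0` by `exp (a t)`. -/
noncomputable def deformedExp (a C t : ℝ) : ℝ := Real.exp (a * deformedLog C t)

noncomputable def deformedExpCoeff (a C : ℝ) (i : ℕ) : ℝ := (∏ j ∈ range i, (a - j * C)) / i !

theorem one_add_mul_pos_of_mem_Icc {C t : ℝ} (hC : -1 < C) (ht : t ∈ Icc (0 : ℝ) 1) :
    0 < 1 + C * t := by
  rcases le_or_gt 0 C with h | h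
  · nlinarith [mul_nonneg h ht.1]
  · nlinarith [mul_le_mul_of_nonpos_left ht.2 h.le]

theorem hasDerivAt_deformedLog {C t : ℝ} (hCt : 0 < 1 + C * t) :
    HasDerivAt (deformedLog C) (1 + C * t)⁻¹ t := by
  by_cases hC : C = 0
  · have hid : deformedLog C = id := funext fun s => by simp [deformedLog, hC]
    rw [hid, hC]
    simpa using hasDerivAt_id t
  · have hfun : deformedLog C = fun t => Real.log (1 + C * t) / C :=
      funext fun s => by simp [deformedLog, hC]
    have hlog : HasDerivAt (fun t => Real.log (1 + C * t)) (C / (1 + C * t)) t := by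
      simpa using (((hasDerivAt_id t).const_mul C).const_add 1).log hCt.ne'
    rw [hfun]
    exact (hlog.div_const C).congr_deriv (by field_simp)

theorem deformedLog_zero (C : ℝ) : deformedLog C 0 = 0 := by
  simp [deformedLog]

theorem deformedExp_zero (a C : ℝ) : deformedExp a C 0 = 1 := by
  simp [deformedExp, deformedLog_zero]

theorem deformedExp_pos (a C t : ℝ) : 0 < deformedExp a C t := Real.exp_pos _

theorem hasDerivAt_deformedExp_div_pow (a : ℝ) {C t : ℝ} (hCt : 0 < 1 + C * t) (n : ℕ) :
    HasDerivAt (fun t => deformedExp a C t / (1 + C * t) ^ n)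
      ((a - n * C) * deformedExp a C t / (1 + C * t) ^ (n + 1)) t := by
  have hexp : HasDerivAt (deformedExp a C) (deformedExp a C t * (a * (1 + C * t)⁻¹)) t :=
    ((hasDerivAt_deformedLog hCt).const_mul a).exp
  have hpow : HasDerivAt (fun t => (1 + C * t) ^ n) (n * (1 + C * t) ^ (n - 1) * C) t := by
    simpa using (((hasDerivAt_id t).const_mul C).const_add 1).fun_pow n
  refine (hexp.div hpow (pow_ne_zero n hCt.ne')).congr_deriv ?_
  rcases n with _ | n
  · field_simp
    ring
  · field_simp
    push_cast
    ring

theorem exists_deformedExp_one_sub_sum_eq (a : ℝ) {C : ℝ} (hC : -1 < C) (N : ℕ) :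
    ∃ ξ ∈ Ioo (0 : ℝ) 1, deformedExp a C 1 - ∑ i ∈ range (N + 1), deformedExpCoeff a C i =
      deformedExpCoeff a C (N + 1) * deformedExp a C ξ / (1 + C * ξ) ^ (N + 1) := by
  set D : ℕ → ℝ → ℝ := fun n t => (∏ j ∈ range n, (a - j * C)) * deformedExp a C t / (1 + C * t) ^ n
  have hD : ∀ n, ∀ t ∈ Icc (0 : ℝ) 1, HasDerivWithinAt (D n) (D (n + 1) t) (Icc 0 1) t := by
    intro n t ht
    have := ((hasDerivAt_deformedExp_div_pow a (one_add_mul_pos_of_mem_Icc hC ht) n).const_mul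
      (∏ j ∈ range n, (a - j * C))).hasDerivWithinAt (s := Icc 0 1)
    simp only [D, mul_div_assoc, prod_range_succ]
    exact this.congr_deriv (by ring)
  obtain ⟨ξ, hξ, h⟩ := exists_sub_sum_eq_of_hasDerivWithinAt hD N
  refine ⟨ξ, hξ, ?_⟩
  simp only [D, deformedExpCoeff, deformedExp_zero, mul_zero, add_zero, one_pow, div_one,
    prod_range_zero, one_mul, pow_zero, mul_one] at h ⊢
  rw [h]
  ring

theorem deformedExpCoeff_succ (a C : ℝ) (n : ℕ) :
    deformedExpCoeff a C (n + 1) = deformedExpCoeff a C n * ((a - n * C) / (n + 1)) := by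
  rw [deformedExpCoeff, deformedExpCoeff, prod_range_succ, Nat.factorial_succ, div_mul_div_comm,
    mul_comm (n ! : ℝ)]
  push_cast
  rfl

theorem monotoneOn_deformedLog {C : ℝ} (hC : -1 < C) : MonotoneOn (deformedLog C) (Icc 0 1) :=
  monotoneOn_Icc_of_hasDerivAt_nonneg
    (fun _ ht => hasDerivAt_deformedLog (one_add_mul_pos_of_mem_Icc hC ht))
    (fun _ ht => (inv_pos.2 (one_add_mul_pos_of_mem_Icc hC ht)).le)

theorem deformedExp_le_deformedExp_one {a C t : ℝ} (ha : 0 ≤ a) (hC : -1 < C)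
    (ht : t ∈ Icc (0 : ℝ) 1) : deformedExp a C t ≤ deformedExp a C 1 :=
  Real.exp_le_exp.2 <| mul_le_mul_of_nonneg_left
    (monotoneOn_deformedLog hC ht (right_mem_Icc.2 zero_le_one) ht.2) ha

theorem sub_le_deformedLog_one {C : ℝ} (hC : -1 < C) : 1 - C / 2 ≤ deformedLog C 1 := by
  have hmono : MonotoneOn (fun t => deformedLog C t - (t - C * t ^ 2 / 2)) (Icc 0 1) := by
    refine monotoneOn_Icc_of_hasDerivAt_nonneg (f' := fun t => (1 + C * t)⁻¹ - (1 - C * t))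
      (fun t ht => (hasDerivAt_deformedLog (one_add_mul_pos_of_mem_Icc hC ht)).sub ?_)
      (fun t ht => ?_)
    · exact ((hasDerivAt_id' t).sub (((hasDerivAt_pow 2 t).const_mul C).div_const 2)).congr_deriv
        (by ring)
    · have hpos := one_add_mul_pos_of_mem_Icc hC ht
      have hsq : (1 + C * t)⁻¹ - (1 - C * t) = (C * t) ^ 2 / (1 + C * t) := by
        field_simp
        ring
      simp only [hsq]
      positivity
  have h := hmono (left_mem_Icc.2 zero_le_one) (right_mem_Icc.2 zero_le_one) zero_le_one
  simp only [deformedLog_zero] at h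
  linarith

theorem exp_sub_le_deformedExp_one {a C : ℝ} (ha : 0 ≤ a) (hC : -1 < C) :
    Real.exp (a - a * C / 2) ≤ deformedExp a C 1 := by
  refine Real.exp_le_exp.2 ?_
  calc a - a * C / 2 = a * (1 - C / 2) := by ring
    _ ≤ a * deformedLog C 1 := mul_le_mul_of_nonneg_left (sub_le_deformedLog_one hC) ha

theorem abs_deformedExpCoeff_le {a C c : ℝ} {Z : ℕ} (hZ : 1 ≤ Z) (ha : 0 ≤ a)
    (haZ : a ≤ c * Z) (hC : |C| ≤ c) (i : ℕ) :
    |deformedExpCoeff a C i| ≤ 2 ^ (Z - 1) * (2 * c) ^ i := by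
  have hc : 0 ≤ c := (abs_nonneg C).trans hC
  have hfactor (j : ℕ) : |a - j * C| ≤ c * (Z + j) := calc
    |a - j * C| ≤ |a| + |j * C| := abs_sub _ _
    _ = a + j * |C| := by rw [abs_of_nonneg ha, abs_mul, Nat.abs_cast]
    _ ≤ c * Z + j * c := by gcongr
    _ = c * (Z + j) := by ring
  have hprod : ∏ j ∈ range i, (c * (Z + j)) = c ^ i * (i ! * (Z + i - 1).choose i) := by
    have h := (Nat.ascFactorial_eq_prod_range Z i).symm.trans
      (Nat.ascFactorial_eq_factorial_mul_choose' Z i)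
    rw [prod_mul_distrib, prod_const, card_range]
    congr 1
    exact_mod_cast h
  have hchoose : ((Z + i - 1).choose i : ℝ) ≤ 2 ^ (Z - 1) * 2 ^ i := by
    rw [← pow_add, show Z - 1 + i = Z + i - 1 by omega]
    exact_mod_cast Nat.choose_le_two_pow _ _
  rw [deformedExpCoeff, abs_div, abs_prod, Nat.abs_cast, div_le_iff₀ (by positivity)]
  calc ∏ j ∈ range i, |a - j * C| ≤ ∏ j ∈ range i, (c * (Z + j)) :=
        prod_le_prod (fun _ _ => abs_nonneg _) (fun j _ => hfactor j)
    _ = c ^ i * (i ! * (Z + i - 1).choose i) := hprod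
    _ ≤ c ^ i * (i ! * (2 ^ (Z - 1) * 2 ^ i)) := by gcongr
    _ = 2 ^ (Z - 1) * (2 * c) ^ i * i ! := by ring

theorem sum_Ico_two_pow_mul_le {c : ℝ} {Z : ℕ} (hZ : 1 ≤ Z) (hc : 0 ≤ c) (hc3 : c < 1 / 3)
    (N : ℕ) : ∑ i ∈ Ico (Z + 1) N, 2 ^ (Z - 1) * (2 * c) ^ i ≤ (2 * Real.exp 1 * c) ^ Z := by
  obtain ⟨k, rfl⟩ := Nat.exists_eq_add_of_le' hZ
  have he : (2 : ℝ) ≤ Real.exp 1 := by linarith [Real.add_one_le_exp (1 : ℝ)]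
  rw [← mul_sum]
  calc 2 ^ (k + 1 - 1) * ∑ i ∈ Ico (k + 1 + 1) N, (2 * c) ^ i
      ≤ 2 ^ k * ((2 * c) ^ (k + 1 + 1) / (1 - 2 * c)) := by
        simp only [Nat.add_sub_cancel]
        gcongr
        exact geom_sum_Ico_le_of_lt_one (by positivity) (by linarith)
    _ ≤ 2 ^ k * ((2 * c) ^ (k + 1 + 1) * 3) := by
        gcongr
        rw [div_le_iff₀ (by linarith)]
        nlinarith [pow_nonneg (by positivity : (0 : ℝ) ≤ 2 * c) (k + 1 + 1)]
    _ = 3 * c * (4 * c) ^ (k + 1) := by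
        rw [mul_pow 4, show (4 : ℝ) = 2 ^ 2 by norm_num, ← pow_mul]
        ring
    _ ≤ 1 * (2 * Real.exp 1 * c) ^ (k + 1) := by gcongr <;> linarith
    _ = (2 * Real.exp 1 * c) ^ (k + 1) := one_mul _

theorem tendsto_sum_deformedExpCoeff {a C c : ℝ} {Z : ℕ} (hZ : 1 ≤ Z) (ha : 0 ≤ a)
    (haZ : a ≤ c * Z) (hC : |C| ≤ c) (hc3 : c < 1 / 3) :
    Tendsto (fun N => ∑ i ∈ range (N + 1), deformedExpCoeff a C i) atTop
      (𝓝 (deformedExp a C 1)) := by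
  have hC1 : -1 < C := by linarith [neg_abs_le C]
  have hc : 0 ≤ c := (abs_nonneg C).trans hC
  have hremainder (N : ℕ) : ‖∑ i ∈ range (N + 1), deformedExpCoeff a C i - deformedExp a C 1‖ ≤
      2 ^ (Z - 1) * deformedExp a C 1 * (3 * c) ^ (N + 1) := by
    obtain ⟨ξ, hξ, h⟩ := exists_deformedExp_one_sub_sum_eq a hC1 N
    have hbase : 2 / 3 ≤ 1 + C * ξ := by
      have : |C * ξ| ≤ c := by
        rw [abs_mul, abs_of_pos hξ.1]
        nlinarith [abs_nonneg C, hξ.2]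
      linarith [neg_abs_le (C * ξ)]
    have hpos : 0 < 1 + C * ξ := by linarith
    rw [Real.norm_eq_abs, abs_sub_comm, h, abs_div, abs_mul, abs_of_pos (deformedExp_pos _ _ _),
      abs_of_pos (pow_pos hpos _)]
    calc |deformedExpCoeff a C (N + 1)| * deformedExp a C ξ / (1 + C * ξ) ^ (N + 1)
        ≤ 2 ^ (Z - 1) * (2 * c) ^ (N + 1) * deformedExp a C 1 / (2 / 3) ^ (N + 1) := by
          gcongr
          · exact mul_nonneg (by positivity) (deformedExp_pos _ _ _).le
          · exact (deformedExp_pos _ _ _).le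
          · exact abs_deformedExpCoeff_le hZ ha haZ hC _
          · exact deformedExp_le_deformedExp_one ha hC1 (Ioo_subset_Icc_self hξ)
      _ = 2 ^ (Z - 1) * deformedExp a C 1 * (3 * c) ^ (N + 1) := by
          rw [show 3 * c = 2 * c / (2 / 3) by ring, div_pow]
          field_simp
          ring
  rw [tendsto_iff_norm_sub_tendsto_zero]
  refine squeeze_zero (fun _ => norm_nonneg _) hremainder ?_
  simpa using ((tendsto_pow_atTop_nhds_zero_of_lt_one (by positivity) (by linarith)).comp
    (tendsto_add_atTop_nat 1)).const_mul (2 ^ (Z - 1) * deformedExp a C 1)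

theorem deformedExp_one_sub_le_sum {a C c : ℝ} {Z : ℕ} (hZ : 1 ≤ Z) (ha : 0 ≤ a)
    (haZ : a ≤ c * Z) (hC : |C| ≤ c) (hc3 : c < 1 / 3) :
    deformedExp a C 1 - (2 * Real.exp 1 * c) ^ Z ≤ ∑ i ∈ range (Z + 1), deformedExpCoeff a C i := by
  have hc : 0 ≤ c := (abs_nonneg C).trans hC
  have hpartial : ∀ N ≥ Z, ∑ i ∈ range (N + 1), deformedExpCoeff a C i ≤
      ∑ i ∈ range (Z + 1), deformedExpCoeff a C i + (2 * Real.exp 1 * c) ^ Z := by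
    intro N hN
    rw [← sum_range_add_sum_Ico _ (by omega : Z + 1 ≤ N + 1)]
    gcongr
    calc ∑ i ∈ Ico (Z + 1) (N + 1), deformedExpCoeff a C i
        ≤ ∑ i ∈ Ico (Z + 1) (N + 1), 2 ^ (Z - 1) * (2 * c) ^ i :=
          sum_le_sum fun i _ => (le_abs_self _).trans (abs_deformedExpCoeff_le hZ ha haZ hC i)
      _ ≤ (2 * Real.exp 1 * c) ^ Z := sum_Ico_two_pow_mul_le hZ hc hc3 _
  have := le_of_tendsto (tendsto_sum_deformedExpCoeff hZ ha haZ hC hc3)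
    (eventually_atTop.2 ⟨Z, hpartial⟩)
  linarith

theorem deformedExp_one_le_sum_of_coeff_nonpos {a C : ℝ} (hC : -1 < C) {N : ℕ}
    (hN : deformedExpCoeff a C (N + 1) ≤ 0) :
    deformedExp a C 1 ≤ ∑ i ∈ range (N + 1), deformedExpCoeff a C i := by
  obtain ⟨ξ, hξ, h⟩ := exists_deformedExp_one_sub_sum_eq a hC N
  have hpos := one_add_mul_pos_of_mem_Icc hC (Ioo_subset_Icc_self hξ)
  have : deformedExpCoeff a C (N + 1) * deformedExp a C ξ / (1 + C * ξ) ^ (N + 1) ≤ 0 :=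
    div_nonpos_of_nonpos_of_nonneg
      (mul_nonpos_of_nonpos_of_nonneg hN (deformedExp_pos _ _ _).le) (by positivity)
  linarith

theorem deformedExp_one_sub_le_sum_prod_max {a C c : ℝ} {Z : ℕ} (hZ : 1 ≤ Z) (ha : 0 ≤ a)
    (haZ : a ≤ c * Z) (hC : |C| ≤ c) (hc3 : c < 1 / 3) :
    deformedExp a C 1 - (2 * Real.exp 1 * c) ^ Z ≤
      ∑ i ∈ range (Z + 1), (∏ j ∈ range i, max (a - j * C) 0) / i ! := by
  have hcoeff_eq {M : ℕ} (hM : ∀ j < M, 0 ≤ a - j * C) :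
      ∀ i ∈ range (M + 1), (∏ j ∈ range i, max (a - j * C) 0) / i ! = deformedExpCoeff a C i :=
    fun i hi => congrArg (· / _) <| prod_congr rfl fun j hj =>
      max_eq_left (hM j (by simp only [Finset.mem_range] at hi hj; omega))
  by_cases hall : ∀ j < Z, 0 ≤ a - j * C
  · rw [sum_congr rfl (hcoeff_eq hall)]
    exact deformedExp_one_sub_le_sum hZ ha haZ hC hc3
  push Not at hall
  obtain ⟨j₀, hj₀Z, hj₀⟩ := hall
  have hex : ∃ j : ℕ, a - j * C < 0 := ⟨j₀, hj₀⟩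
  set M := Nat.find hex
  have hMZ : M < Z := (Nat.find_min' hex hj₀).trans_lt hj₀Z
  have hprefix : ∀ j < M, 0 ≤ a - j * C := fun j hj => not_lt.1 (Nat.find_min hex hj)
  have hcoeff : deformedExpCoeff a C (M + 1) ≤ 0 := by
    rw [deformedExpCoeff_succ, ← hcoeff_eq hprefix M (self_mem_range_succ M)]
    exact mul_nonpos_of_nonneg_of_nonpos (by positivity)
      (div_nonpos_of_nonpos_of_nonneg (Nat.find_spec hex).le (by positivity))
  have hc : 0 ≤ c := (abs_nonneg C).trans hC
  calc deformedExp a C 1 - (2 * Real.exp 1 * c) ^ Z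
      ≤ deformedExp a C 1 := sub_le_self _ (pow_nonneg (mul_nonneg (by positivity) hc) _)
    _ ≤ ∑ i ∈ range (M + 1), deformedExpCoeff a C i :=
        deformedExp_one_le_sum_of_coeff_nonpos (by linarith [neg_abs_le C]) hcoeff
    _ = ∑ i ∈ range (M + 1), (∏ j ∈ range i, max (a - j * C) 0) / i ! :=
        (sum_congr rfl (hcoeff_eq hprefix)).symm
    _ ≤ ∑ i ∈ range (Z + 1), (∏ j ∈ range i, max (a - j * C) 0) / i ! :=
        sum_le_sum_of_subset_of_nonneg (range_subset_range.2 (by omega))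
          (fun _ _ _ => by positivity)

theorem prod_div_factorial_le_of_eq_mul {x r y : ℕ → ℝ} {Z : ℕ} (hx0 : x 0 = 1)
    (hx : ∀ i ∈ Finset.Icc 1 Z, x i = x (i - 1) * r i)
    (hy : ∀ j < Z, 0 ≤ y j) (hyr : ∀ j < Z, y j ≤ (j + 1) * r (j + 1)) :
    ∀ i ≤ Z, (∏ j ∈ range i, y j) / i ! ≤ x i := by
  intro i
  induction i with
  | zero => simp [hx0]
  | succ i ih =>
    intro hi
    have hprev := ih (by omega)
    rw [hx (i + 1) (Finset.mem_Icc.2 ⟨by omega, hi⟩), Nat.add_sub_cancel, prod_range_succ,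
      Nat.factorial_succ, Nat.cast_mul, mul_comm ((i + 1 : ℕ) : ℝ), ← div_mul_div_comm]
    have hnonneg : 0 ≤ (∏ j ∈ range i, y j) / i ! :=
      div_nonneg (prod_nonneg fun j hj => hy j (by simp at hj; omega)) (by positivity)
    exact mul_le_mul hprev (by rw [div_le_iff₀' (by positivity)]; push_cast; exact hyr i (by omega))
      (div_nonneg (hy i (by omega)) (by positivity)) (hnonneg.trans hprev)

theorem stmt_18_general (Z : ℕ) (hZ : 2 ≤ Z) (A B : ℕ → ℝ)
    (hA : ∀ i ∈ Finset.Icc 1 Z, 0 ≤ A i)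
    (hB : ∀ i ∈ Finset.Icc 1 Z, 0 ≤ 1 - ((i : ℝ) - 1) * B i)
    (nn : ℕ → ℝ) (hn0 : nn 0 = 1)
    (hrec : ∀ i ∈ Finset.Icc 1 Z,
      nn i = nn (i - 1) * ((1 / (i : ℝ)) * A i * (1 - ((i : ℝ) - 1) * B i)))
    (A1 A2 C1 C2 : ℝ)
    (hA1 : IsLeast ((fun i => A i) '' (Finset.Icc 1 Z : Finset ℕ)) A1)
    (hA2 : IsGreatest ((fun i => A i) '' (Finset.Icc 1 Z : Finset ℕ)) A2)
    (hC1 : IsLeast ((fun i => A i * B i) '' (Finset.Icc 1 Z : Finset ℕ)) C1)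
    (hC2 : IsGreatest ((fun i => A i * B i) '' (Finset.Icc 1 Z : Finset ℕ)) C2)
    (c : ℝ) (hc3 : c < 1 / 3)
    (hbound : ∀ x ∈ Set.Icc A1 A2, x / Z ≤ c)
    (hbound' : ∀ x ∈ Set.Icc C1 C2, |x| ≤ c) :
    Real.exp (A1 - A1 * C2 / 2) - (2 * Real.exp 1 * c) ^ Z ≤
      ∑ i ∈ Finset.range (Z + 1), nn i := by
  have hZ1 : 1 ≤ Z := by omega
  have hA1_nonneg : 0 ≤ A1 := by
    obtain ⟨i, hi, rfl⟩ := hA1.1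
    exact hA i hi
  have hA1_le : A1 ≤ c * Z := by
    have h := hbound A1 ⟨le_rfl, hA2.2 hA1.1⟩
    rwa [div_le_iff₀ (by positivity)] at h
  have hC2_le : |C2| ≤ c := hbound' C2 ⟨hC2.2 hC1.1, le_rfl⟩
  have hfactor (j : ℕ) (hj : j < Z) :
      max (A1 - j * C2) 0 ≤ (j + 1) * ((1 / ((j + 1 : ℕ) : ℝ)) * A (j + 1) *
        (1 - (((j + 1 : ℕ) : ℝ) - 1) * B (j + 1))) := by
    have hmem : j + 1 ∈ Finset.Icc 1 Z := Finset.mem_Icc.2 ⟨by omega, hj⟩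
    have hA_ge : A1 ≤ A (j + 1) := hA1.2 ⟨j + 1, hmem, rfl⟩
    have hAB_le : A (j + 1) * B (j + 1) ≤ C2 := hC2.2 ⟨j + 1, hmem, rfl⟩
    have hB' := hB (j + 1) hmem
    push_cast at hB' ⊢
    rw [add_sub_cancel_right] at hB' ⊢
    field_simp
    refine max_le ?_ (mul_nonneg (hA _ hmem) hB')
    nlinarith [mul_le_mul_of_nonneg_left hAB_le (Nat.cast_nonneg (α := ℝ) j)]
  calc Real.exp (A1 - A1 * C2 / 2) - (2 * Real.exp 1 * c) ^ Z
      ≤ deformedExp A1 C2 1 - (2 * Real.exp 1 * c) ^ Z := by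
        gcongr
        exact exp_sub_le_deformedExp_one hA1_nonneg (by linarith [neg_abs_le C2])
    _ ≤ ∑ i ∈ range (Z + 1), (∏ j ∈ range i, max (A1 - j * C2) 0) / i ! :=
        deformedExp_one_sub_le_sum_prod_max hZ1 hA1_nonneg hA1_le hC2_le hc3
    _ ≤ ∑ i ∈ range (Z + 1), nn i :=
        sum_le_sum fun i hi => prod_div_factorial_le_of_eq_mul hn0 hrec
          (fun _ _ => le_max_right _ _) hfactor i (by simp only [Finset.mem_range] at hi; omega)

/-- Lower-bound half of the summation lemma (Greenhill–McKay–Wang, Cor. 4.5). -/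
theorem stmt_18 (Z : ℕ) (hZ : 2 ≤ Z) (A B : ℕ → ℝ)
    (hA : ∀ i ∈ Finset.Icc 1 Z, 0 ≤ A i)
    (hB : ∀ i ∈ Finset.Icc 1 Z, 0 ≤ 1 - ((i : ℝ) - 1) * B i)
    (nn : ℕ → ℝ) (hn0 : nn 0 = 1)
    (hrec : ∀ i ∈ Finset.Icc 1 Z,
      nn i = nn (i - 1) * ((1 / (i : ℝ)) * A i * (1 - ((i : ℝ) - 1) * B i)))
    (A1 A2 C1 C2 : ℝ)
    (hA1 : IsLeast ((fun i => A i) '' (Finset.Icc 1 Z : Finset ℕ)) A1)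
    (hA2 : IsGreatest ((fun i => A i) '' (Finset.Icc 1 Z : Finset ℕ)) A2)
    (hC1 : IsLeast ((fun i => A i * B i) '' (Finset.Icc 1 Z : Finset ℕ)) C1)
    (hC2 : IsGreatest ((fun i => A i * B i) '' (Finset.Icc 1 Z : Finset ℕ)) C2)
    (c : ℝ) (hc0 : 0 < c) (hc3 : c < 1 / 3)
    (hbound : ∀ x ∈ Set.Icc A1 A2, x / Z ≤ c)
    (hbound' : ∀ x ∈ Set.Icc C1 C2, |x| ≤ c) :
    Real.exp (A1 - A1 * C2 / 2) - (2 * Real.exp 1 * c) ^ Z ≤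
      ∑ i ∈ Finset.range (Z + 1), nn i :=
  stmt_18_general Z hZ A B hA hB nn hn0 hrec A1 A2 C1 C2 hA1 hA2 hC1 hC2 c hc3 hbound hbound'
end
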